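/- arXiv:1705.10625 — 3 statements merged into one kernel-verified Lean document; each statement's English description precedes it below -/
import Mathlib

section
/- Let L be a nonempty regular language over a finite alphabet Σ and let k ≥ 1. Then the collection of trim compact deterministic k-block automata recognizing L is finite up to isomorphism: there exists a finite set S of block automata such that every trim compact deterministic k-block automaton recognizing L is isomorphic to a member of S. -/
set_option autoImplicit false

/-- A block automaton over an alphabet `α`: a set of initial states, a set of final
states, and a set of transitions labeled by words over `α`. -/
structure BlockAutomaton (α : Type) (Q : Type) where
  init : Set Q
  final : Set Q
  trans : Set (Q × List α × Q)

namespace BlockAutomaton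

variable {α Q : Type}

/-- Well-formedness: the transition set is finite and every label is a block
(a nonempty word). -/
def IsWF (A : BlockAutomaton α Q) : Prop :=
  A.trans.Finite ∧ ∀ t ∈ A.trans, t.2.1 ≠ ([] : List α)

/-- The transitive closure `δ*` of the transition relation. -/
inductive Path (A : BlockAutomaton α Q) : Q → List α → Q → Prop
  | refl (p : Q) : Path A p [] p
  | step {p r q : Q} {b u : List α} :
      (p, b, r) ∈ A.trans → Path A r u q → Path A p (b ++ u) q

/-- The right language of a state. -/
def rightLang (A : BlockAutomaton α Q) (q : Q) : Language α :=
  {w | ∃ f ∈ A.final, A.Path q w f}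

/-- The language recognized by the automaton. -/
def lang (A : BlockAutomaton α Q) : Language α :=
  {w | ∃ i ∈ A.init, ∃ f ∈ A.final, A.Path i w f}

/-- Deterministic: a unique initial state, and the labels of two distinct transitions
going out of the same state are never prefixes of one another. -/
def Deterministic (A : BlockAutomaton α Q) : Prop :=
  (∃ i, A.init = {i}) ∧
    ∀ p b₁ q₁ b₂ q₂, (p, b₁, q₁) ∈ A.trans → (p, b₂, q₂) ∈ A.trans →
      (b₁, q₁) ≠ (b₂, q₂) → ¬ b₁ <+: b₂

/-- Trim: every state is accessible and co-accessible. -/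
def Trim (A : BlockAutomaton α Q) : Prop :=
  ∀ q : Q, (∃ i ∈ A.init, ∃ u, A.Path i u q) ∧ (∃ f ∈ A.final, ∃ v, A.Path q v f)

/-- `k`-block: every transition label has length at most `k`. -/
def KBlock (A : BlockAutomaton α Q) (k : ℕ) : Prop :=
  ∀ t ∈ A.trans, t.2.1.length ≤ k

/-- Compact: no two distinct states have the same right language. -/
def Compact (A : BlockAutomaton α Q) : Prop :=
  ∀ p q : Q, A.rightLang p = A.rightLang q → p = q

/-- Left quotient `u⁻¹L` of a language by a word. -/
def leftQuot (u : List α) (L : Language α) : Language α := {w | u ++ w ∈ L}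

/-- Residual: every right language is a left quotient of the recognized language. -/
def Residual (A : BlockAutomaton α Q) : Prop :=
  ∀ p : Q, ∃ u : List α, A.rightLang p = leftQuot u A.lang

/-- L-equivalence: same language and same family of right languages. -/
def LEquiv {Q₁ Q₂ : Type} (A : BlockAutomaton α Q₁) (B : BlockAutomaton α Q₂) : Prop :=
  A.lang = B.lang ∧ Set.range A.rightLang = Set.range B.rightLang

/-- The set of final labels FB(A). -/
def finalLabels (A : BlockAutomaton α Q) : Set (List α) :=
  {b | ∃ f ∈ A.final, ∃ q, (f, b, q) ∈ A.trans}

/-- The set of consistency C(A): pairs (b, s) with b a block such that every final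
state has a transition labeled b to s. -/
def consist (A : BlockAutomaton α Q) : Set (List α × Q) :=
  {bs | bs.1 ≠ [] ∧ ∀ f ∈ A.final, (f, bs.1, bs.2) ∈ A.trans}

/-- The (b,s)-cut: remove every transition (f, b, s) with f final. -/
def cut (A : BlockAutomaton α Q) (b : List α) (s : Q) : BlockAutomaton α Q :=
  ⟨A.init, A.final, {t ∈ A.trans | ¬(t.1 ∈ A.final ∧ t.2.1 = b ∧ t.2.2 = s)}⟩

/-- (b, s) is a vacant pair: b is a block and no final state has a transition
labeled b to s. -/
def Vacant (A : BlockAutomaton α Q) (b : List α) (s : Q) : Prop :=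
  b ≠ [] ∧ ∀ f ∈ A.final, (f, b, s) ∉ A.trans

/-- The (b,s)-add: add the transition (f, b, s) for every final state f. -/
def add (A : BlockAutomaton α Q) (b : List α) (s : Q) : BlockAutomaton α Q :=
  ⟨A.init, A.final, A.trans ∪ {t | t.1 ∈ A.final ∧ t.2.1 = b ∧ t.2.2 = s}⟩

/-- The underlying edge relation of the automaton. -/
def Edge (A : BlockAutomaton α Q) (p q : Q) : Prop := ∃ b, (p, b, q) ∈ A.trans

/-- Reachability. -/
def Reach (A : BlockAutomaton α Q) : Q → Q → Prop := Relation.ReflTransGen A.Edge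

/-- The orbit (strongly connected component) of a state. -/
def orbitOf (A : BlockAutomaton α Q) (q : Q) : Set Q := {p | A.Reach q p ∧ A.Reach p q}

/-- A set is an orbit if it is the strongly connected component of some state. -/
def IsOrbit (A : BlockAutomaton α Q) (O : Set Q) : Prop := ∃ q, O = A.orbitOf q

/-- A trivial orbit: a single state with no self-loop. -/
def TrivialOrbit (A : BlockAutomaton α Q) (O : Set Q) : Prop :=
  ∃ p, O = {p} ∧ ∀ b, (p, b, p) ∉ A.trans

/-- A non re-entering component: a union of orbits such that no state outside
reachable from it can reach back. -/
def NonReentering (A : BlockAutomaton α Q) (R : Set Q) : Prop :=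
  (∀ p ∈ R, A.orbitOf p ⊆ R) ∧
    ∀ r ∈ R, ∀ q, q ∉ R → A.Reach r q → ¬ A.Reach q r

/-- A gate of R: a state of R that is final or the origin of an out-transition. -/
def IsGate (A : BlockAutomaton α Q) (R : Set Q) (g : Q) : Prop :=
  g ∈ R ∧ (g ∈ A.final ∨ ∃ b p, (g, b, p) ∈ A.trans ∧ p ∉ R)

/-- R is transverse: all gates agree on finality and on out-transitions. -/
def Transverse (A : BlockAutomaton α Q) (R : Set Q) : Prop :=
  ∀ g₁ g₂, A.IsGate R g₁ → A.IsGate R g₂ →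
    (g₁ ∈ A.final ↔ g₂ ∈ A.final) ∧
      ∀ b p, p ∉ R → ((g₁, b, p) ∈ A.trans ↔ (g₂, b, p) ∈ A.trans)

/-- The orbit property: every orbit is transverse. -/
def OrbitProperty (A : BlockAutomaton α Q) : Prop :=
  ∀ O : Set Q, A.IsOrbit O → A.Transverse O

/-- The restriction of the automaton to the internal transitions of R. -/
def internalAut (A : BlockAutomaton α Q) (R : Set Q) : BlockAutomaton α Q :=
  ⟨A.init, A.final, {t ∈ A.trans | t.1 ∈ R ∧ t.2.2 ∈ R}⟩

/-- The internal language of a state of R: words sending it to a gate of R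
through internal transitions. -/
def Lin (A : BlockAutomaton α Q) (R : Set Q) (p : Q) : Language α :=
  {w | ∃ g, A.IsGate R g ∧ (A.internalAut R).Path p w g}

/-- The external language of a state of R. -/
def Lext (A : BlockAutomaton α Q) (R : Set Q) (p : Q) : Language α :=
  {w | (p ∈ A.final ∧ w = []) ∨
    ∃ b q, (p, b, q) ∈ A.trans ∧ q ∉ R ∧ ∃ v, v ∈ A.rightLang q ∧ w = b ++ v}

/-- The external language of R: the (common, when R is transverse) external
language of the gates of R (empty if R has no gate). -/
def Lout (A : BlockAutomaton α Q) (R : Set Q) : Language α :=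
  {w | ∃ g, A.IsGate R g ∧ w ∈ A.Lext R g}

/-- The automaton B_O of an orbit O used in the BW-test: transitions are the internal
transitions of O, final states are the gates of O (the initial states are irrelevant). -/
def orbAut (A : BlockAutomaton α Q) (O : Set Q) : BlockAutomaton α Q :=
  ⟨A.init, {g | A.IsGate O g}, {t ∈ A.trans | t.1 ∈ O ∧ t.2.2 ∈ O}⟩

/-- Fuel-indexed version of the BW-test (each recursive call removes at least one
transition, so on automata with finitely many transitions the recursion needs only
finitely much fuel). -/
def BWTestFuel : ℕ → BlockAutomaton α Q → Prop
  | 0, _ => False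
  | n + 1, A => A.OrbitProperty ∧
      ∀ O : Set Q, A.IsOrbit O → ¬ A.TrivialOrbit O →
        ∃ b s, (b, s) ∈ (A.orbAut O).consist ∧ BWTestFuel n ((A.orbAut O).cut b s)

/-- The BW-test: A passes iff A has the orbit property and, for every nontrivial
orbit O of A, some consistent cut of the automaton B_O of the orbit passes the
BW-test (well-founded since every cut removes a transition; `BWTestFuel` is
monotone in the fuel, so the existential gives exactly this recursive predicate). -/
def BWTest (A : BlockAutomaton α Q) : Prop := ∃ n, BWTestFuel n A

/-- The orbit automaton Orb(A, q): states are the orbit of q, initial state q, final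
states the gates of the orbit, transitions the internal transitions of the orbit. -/
def orbAutAt (A : BlockAutomaton α Q) (q : Q) :
    BlockAutomaton α {p : Q // p ∈ A.orbitOf q} where
  init := {x | x.val = q}
  final := {x | A.IsGate (A.orbitOf q) x.val}
  trans := {t | (t.1.val, t.2.1, t.2.2.val) ∈ A.trans}

/-- The pathway function Δ. -/
def pathway (A : BlockAutomaton α Q) (p : Q) (u : List α) : Set (List α × Q) :=
  {vq | A.Path p (u ++ vq.1) vq.2 ∧
    ∀ x, x <+: vq.1 → x ≠ vq.1 → ∀ r, ¬ A.Path p (u ++ x) r}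

/-- The states of the minimal DFA of L: the nonempty left quotients of L. -/
def QuotState (L : Language α) : Type :=
  {P : Language α // (∃ u : List α, P = leftQuot u L) ∧ ∃ w, w ∈ P}

/-- The minimal DFA of L. -/
def minDFA (L : Language α) : BlockAutomaton α (QuotState L) where
  init := {P | P.val = L}
  final := {P | [] ∈ P.val}
  trans := {t | ∃ a : α, t.2.1 = [a] ∧ t.2.2.val = leftQuot [a] t.1.val}

/-- The k-transition automaton of L. -/
def kTransAut (L : Language α) (k : ℕ) : BlockAutomaton α (QuotState L) where
  init := (minDFA L).init
  final := (minDFA L).final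
  trans := {t | (minDFA L).Path t.1 t.2.1 t.2.2 ∧ 1 ≤ t.2.1.length ∧ t.2.1.length ≤ k ∧
    ∀ u, u <+: t.2.1 → u ≠ [] → u ≠ t.2.1 → u ∉ t.1.val}

/-- B is isomorphic to a sub-automaton of T. -/
def IsoToSub {Q₁ Q₂ : Type} (B : BlockAutomaton α Q₁) (T : BlockAutomaton α Q₂) : Prop :=
  ∃ φ : Q₁ → Q₂, Function.Injective φ ∧
    φ '' B.init ⊆ T.init ∧ φ '' B.final ⊆ T.final ∧
    ∀ p b q, (p, b, q) ∈ B.trans → (φ p, b, φ q) ∈ T.trans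

/-- Isomorphism of block automata. -/
def Isomorphic {Q₁ Q₂ : Type} (B : BlockAutomaton α Q₁) (C : BlockAutomaton α Q₂) : Prop :=
  ∃ φ : Q₁ ≃ Q₂, φ '' B.init = C.init ∧ φ '' B.final = C.final ∧
    ∀ p b q, ((p, b, q) ∈ B.trans ↔ (φ p, b, φ q) ∈ C.trans)

/-- The substitution of B for the orbit O(q) of A via h (iA is the unique initial
state of A). -/
def substAut {QB : Type} (A : BlockAutomaton α Q) (iA q : Q)
    (B : BlockAutomaton α QB) (h : Q → QB) :
    BlockAutomaton α ({p : Q // p ∉ A.orbitOf q} ⊕ QB) where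
  init := {x | (iA ∈ A.orbitOf q ∧ x = Sum.inr (h iA)) ∨
    ∃ hp : iA ∉ A.orbitOf q, x = Sum.inl ⟨iA, hp⟩}
  final := {x | (∃ p, ∃ hp : p ∉ A.orbitOf q, p ∈ A.final ∧ x = Sum.inl ⟨p, hp⟩) ∨
    ((∃ f ∈ A.final, f ∈ A.orbitOf q) ∧ ∃ fB ∈ B.final, x = Sum.inr fB)}
  trans := {t |
    (∃ p r b, ∃ hp : p ∉ A.orbitOf q, ∃ hr : r ∉ A.orbitOf q,
      (p, b, r) ∈ A.trans ∧ t = (Sum.inl ⟨p, hp⟩, b, Sum.inl ⟨r, hr⟩)) ∨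
    (∃ p r b, (p, b, r) ∈ B.trans ∧ t = (Sum.inr p, b, Sum.inr r)) ∨
    (∃ p o b, ∃ hp : p ∉ A.orbitOf q,
      (p, b, o) ∈ A.trans ∧ o ∈ A.orbitOf q ∧ t = (Sum.inl ⟨p, hp⟩, b, Sum.inr (h o))) ∨
    (∃ fB o p b, ∃ hp : p ∉ A.orbitOf q, fB ∈ B.final ∧
      (o, b, p) ∈ A.trans ∧ o ∈ A.orbitOf q ∧ t = (Sum.inr fB, b, Sum.inl ⟨p, hp⟩))}

end BlockAutomaton


namespace BlockAutomaton

variable {α Q : Type}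

lemma path_append {A : BlockAutomaton α Q} {p q f : Q} {u v : List α}
    (h1 : A.Path p u q) (h2 : A.Path q v f) : A.Path p (u ++ v) f := by
  induction h1 with
  | refl => simpa using h2
  | step ht _ ih => rw [List.append_assoc]; exact Path.step ht (ih h2)

lemma path_cons_inv {A : BlockAutomaton α Q} (hwf : A.IsWF) (hdet : A.Deterministic)
    {p r f : Q} {b x : List α} (hbr : (p, b, r) ∈ A.trans)
    (h2 : A.Path p (b ++ x) f) : A.Path r x f := by
  generalize hy : b ++ x = y at h2
  cases h2 with
  | refl =>
    exact absurd (List.append_eq_nil_iff.mp hy).1 (hwf.2 _ hbr)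
  | @step p r₂ f b₂ v ht hrest =>
    have hpre : b <+: b₂ ∨ b₂ <+: b :=
      List.prefix_or_prefix_of_prefix (l₃ := b₂ ++ v) (hy ▸ ⟨x, rfl⟩) ⟨v, rfl⟩
    have heq : (b, r) = (b₂, r₂) := by
      by_contra hne
      rcases hpre with h | h
      · exact hdet.2 p b r b₂ r₂ hbr ht hne h
      · exact hdet.2 p b₂ r₂ b r ht hbr (fun h' => hne (Prod.ext (congrArg Prod.fst h'.symm) (congrArg Prod.snd h'.symm))) h
    injection heq with hb hr
    subst hb hr
    have : x = v := List.append_cancel_left hy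
    subst this
    exact hrest

lemma det_shift {A : BlockAutomaton α Q} (hwf : A.IsWF) (hdet : A.Deterministic)
    {p q f : Q} {u w : List α} (h1 : A.Path p u q) (h2 : A.Path p (u ++ w) f) :
    A.Path q w f := by
  induction h1 with
  | refl => simpa using h2
  | step ht _ ih =>
    rw [List.append_assoc] at h2
    exact ih (path_cons_inv hwf hdet ht h2)

lemma rightLang_eq_leftQuot {A : BlockAutomaton α Q} (hwf : A.IsWF)
    (hdet : A.Deterministic) {i q : Q} (hi : A.init = {i}) {u : List α}
    (hu : A.Path i u q) : A.rightLang q = leftQuot u A.lang := by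
  ext w
  constructor
  · rintro ⟨f, hf, hp⟩
    exact ⟨i, by simp [hi], f, hf, path_append hu hp⟩
  · rintro ⟨i', hi', f, hf, hp⟩
    have : i' = i := by rwa [hi] at hi'
    subst this
    exact ⟨f, hf, det_shift hwf hdet hu hp⟩

end BlockAutomaton

lemma quot_finite {α : Type} {L : Language α} (hreg : L.IsRegular) :
    {P : Language α | ∃ u, P = BlockAutomaton.leftQuot u L}.Finite := by
  obtain ⟨σ, _, M, hM⟩ := hreg
  apply (Set.finite_range (fun s : σ => {w | M.evalFrom s w ∈ M.accept})).subset
  rintro P ⟨u, rfl⟩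
  refine ⟨M.eval u, ?_⟩
  ext w
  simp only [BlockAutomaton.leftQuot, Set.mem_setOf_eq, ← hM, DFA.mem_accepts,
    DFA.eval, DFA.evalFrom_of_append]


/-- For a nonempty regular language L and k ≥ 1, the collection of trim
compact deterministic k-block automata recognizing L is finite up to isomorphism. -/
theorem stmt4 {α : Type} [Fintype α]
    (L : Language α) (hreg : L.IsRegular) (hne : ∃ w, w ∈ L) (k : ℕ) (hk : 1 ≤ k) :
    ∃ S : Set (Σ n : ℕ, BlockAutomaton α (Fin n)), S.Finite ∧
      ∀ (QB : Type) (B : BlockAutomaton α QB), Finite QB →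
        B.IsWF → B.Trim → B.Compact → B.Deterministic → B.KBlock k → B.lang = L →
        ∃ C ∈ S, B.Isomorphic C.2 := by
  classical
  have hQfin := quot_finite hreg
  set 𝒬 : Set (Language α) := {P | ∃ u, P = BlockAutomaton.leftQuot u L} with h𝒬
  haveI : Finite ↥𝒬 := hQfin.to_subtype
  set N : ℕ := Nat.card ↥𝒬 with hN
  have hWfin : {l : List α | l.length ≤ k}.Finite := List.finite_length_le α k
  have hfin : ∀ n : ℕ,
      {A : BlockAutomaton α (Fin n) | ∀ t ∈ A.trans, t.2.1.length ≤ k}.Finite := by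
    intro n
    have hT : {t : Fin n × List α × Fin n | t.2.1.length ≤ k}.Finite := by
      refine (Set.finite_univ.prod (hWfin.prod Set.finite_univ)).subset ?_
      intro t ht
      exact ⟨trivial, ht, trivial⟩
    refine ((Set.finite_univ.prod (Set.finite_univ.prod hT.finite_subsets)).image
      (fun x : Set (Fin n) × Set (Fin n) × Set (Fin n × List α × Fin n) =>
        BlockAutomaton.mk x.1 x.2.1 x.2.2)).subset ?_
    intro A hA
    exact ⟨(A.init, A.final, A.trans), ⟨trivial, trivial, hA⟩, rfl⟩
  refine ⟨⋃ n ∈ Set.Iic N,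
    Sigma.mk n '' {A : BlockAutomaton α (Fin n) | ∀ t ∈ A.trans, t.2.1.length ≤ k},
    (Set.finite_Iic N).biUnion (fun n _ => (hfin n).image _), ?_⟩
  intro QB B hFin hwf htrim hcomp hdet hkb hlang
  haveI := hFin
  obtain ⟨i, hi⟩ := hdet.1
  have hmem : ∀ q, B.rightLang q ∈ 𝒬 := by
    intro q
    obtain ⟨⟨i', hi', u, hu⟩, _⟩ := htrim q
    have : i' = i := by rwa [hi] at hi'
    subst this
    exact ⟨u, by rw [BlockAutomaton.rightLang_eq_leftQuot hwf hdet hi hu, hlang]⟩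
  have hinj : Function.Injective (fun q : QB => (⟨B.rightLang q, hmem q⟩ : ↥𝒬)) := by
    intro p q h
    exact hcomp p q (congrArg Subtype.val h)
  have hcard : Nat.card QB ≤ N := Nat.card_le_card_of_injective _ hinj
  set n := Nat.card QB with hn
  let e : QB ≃ Fin n := Finite.equivFin QB
  refine ⟨⟨n, ⟨e '' B.init, e '' B.final,
    {t | (e.symm t.1, t.2.1, e.symm t.2.2) ∈ B.trans}⟩⟩, ?_, ?_⟩
  · refine Set.mem_biUnion (show n ∈ Set.Iic N from hcard) ?_
    exact ⟨_, fun t ht => hkb _ ht, rfl⟩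
  · refine ⟨e, rfl, rfl, ?_⟩
    intro p b q
    simp only [Set.mem_setOf_eq, Equiv.symm_apply_apply]
end

section
/- Let A be a trim compact deterministic block automaton over a finite alphabet Σ recognizing a regular language L. Then the number of states of A is at most the number of distinct nonempty left quotients of L, i.e., |Q| ≤ |{u⁻¹L | u ∈ Σ*, u⁻¹L ≠ ∅}|. -/
set_option autoImplicit false

namespace BlockAutomaton

variable {α Q : Type}

lemma Path.trans' {A : BlockAutomaton α Q} {p q r : Q} {u v : List α}
    (h1 : A.Path p u q) (h2 : A.Path q v r) : A.Path p (u ++ v) r := by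
  induction h1 with
  | refl => simpa using h2
  | step ht _ ih => rw [List.append_assoc]; exact Path.step ht (ih h2)

lemma path_inv {A : BlockAutomaton α Q} {p f : Q} {w : List α} (h : A.Path p w f) :
    (w = [] ∧ p = f) ∨ ∃ b r rest, (p, b, r) ∈ A.trans ∧ A.Path r rest f ∧ w = b ++ rest := by
  cases h with
  | refl => exact Or.inl ⟨rfl, rfl⟩
  | step ht hp => exact Or.inr ⟨_, _, _, ht, hp, rfl⟩

/-- Determinized path splitting. -/
lemma det_split {A : BlockAutomaton α Q} (hwf : A.IsWF) (hdet : A.Deterministic)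
    {i q f : Q} {u w : List α}
    (h1 : A.Path i u q) (h2 : A.Path i (u ++ w) f) : A.Path q w f := by
  induction h1 generalizing w with
  | refl => simpa using h2
  | @step p r q' b u' ht _ ih =>
    rw [List.append_assoc] at h2
    rcases path_inv h2 with ⟨hnil, _⟩ | ⟨b₂, r₂, rest, ht₂, hrest, heq⟩
    · exact absurd (List.append_eq_nil_iff.mp hnil).1 (hwf.2 _ ht)
    · have hpre : b <+: b₂ ∨ b₂ <+: b :=
        List.prefix_or_prefix_of_prefix
          (l₃ := b ++ (u' ++ w)) ⟨u' ++ w, rfl⟩ ⟨rest, heq.symm⟩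
      have heq2 : (b, r) = (b₂, r₂) := by
        by_contra hne
        rcases hpre with h | h
        · exact hdet.2 p b r b₂ r₂ ht ht₂ hne h
        · exact hdet.2 p b₂ r₂ b r ht₂ ht (fun hx => hne (by simp_all [Prod.ext_iff])) h
      obtain ⟨hb, hr⟩ := Prod.mk.injEq .. ▸ heq2
      subst hb; subst hr
      have : rest = u' ++ w := by simpa using heq.symm
      subst this
      exact ih hrest

lemma rightLang_eq_quot {A : BlockAutomaton α Q} (hwf : A.IsWF) (hdet : A.Deterministic)
    {i q : Q} {u : List α} (hi : i ∈ A.init) (hp : A.Path i u q) :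
    A.rightLang q = leftQuot u A.lang := by
  obtain ⟨i₀, hinit⟩ := hdet.1
  have hii : i = i₀ := by rw [hinit] at hi; exact hi
  subst hii
  ext w
  constructor
  · rintro ⟨f, hf, hpath⟩
    exact ⟨i, by rw [hinit]; rfl, f, hf, hp.trans' hpath⟩
  · rintro ⟨i', hi', f, hf, hpath⟩
    have : i' = i := by rw [hinit] at hi'; exact hi'
    subst this
    exact ⟨f, hf, det_split hwf hdet hp hpath⟩

end BlockAutomaton

/-- A trim compact deterministic block automaton recognizing a regular
language L has at most as many states as L has distinct nonempty left quotients. -/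
theorem stmt5 {α Q : Type} [Fintype α] [Fintype Q]
    (A : BlockAutomaton α Q) (L : Language α)
    (hwf : A.IsWF) (htrim : A.Trim) (hcomp : A.Compact) (hdet : A.Deterministic)
    (hlang : A.lang = L)
    (hreg : {P : Language α | ∃ u : List α, P = BlockAutomaton.leftQuot u L}.Finite) :
    Fintype.card Q ≤
      {P : Language α |
        (∃ u : List α, P = BlockAutomaton.leftQuot u L) ∧ ∃ w, w ∈ P}.ncard := by
  classical
  set S : Set (Language α) :=
    {P : Language α | (∃ u : List α, P = BlockAutomaton.leftQuot u L) ∧ ∃ w, w ∈ P}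
  have hSfin : S.Finite := hreg.subset (fun P hP => hP.1)
  have hmem : ∀ q : Q, A.rightLang q ∈ S := by
    intro q
    obtain ⟨⟨i, hi, u, hpath⟩, ⟨f, hf, v, hpathv⟩⟩ := htrim q
    refine ⟨⟨u, ?_⟩, ⟨v, f, hf, hpathv⟩⟩
    rw [← hlang]
    exact BlockAutomaton.rightLang_eq_quot hwf hdet hi hpath
  have hinj : Function.Injective (fun q : Q => (⟨A.rightLang q, hmem q⟩ : S)) := by
    intro p q h
    exact hcomp p q (congrArg Subtype.val h)
  have : Fintype.card Q ≤ Nat.card S := by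
    have : Finite S := hSfin
    calc Fintype.card Q = Nat.card Q := (Nat.card_eq_fintype_card).symm
    _ ≤ Nat.card S := Nat.card_le_card_of_injective _ hinj
  rwa [Nat.card_coe_set_eq, Set.ncard] at this
end

section
/- Let A be a trim deterministic block automaton over a finite alphabet Σ and let R be a transverse non re-entering component of A. Then for any two states p, q ∈ R, L(p) = L(q) if and only if Lin_R(p) = Lin_R(q). -/
set_option autoImplicit false

/-! For a state `p` of a transverse component `R`, an accepting run from `p` stays in `R` up to
some gate and then leaves; since all gates share the same external language `K`, this gives
`L(p) = Lin_R(p) · K`, hence one direction. Conversely, suppose `Lin_R(p) · K = Lin_R(q) · K`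
(`K` is nonempty by trimness), let `v` be a shortest word of `K` and `w ∈ Lin_R(p)`. Then
`w v = u v'` with `u ∈ Lin_R(q)`, `v' ∈ K`. By minimality of `v`, `u` is not longer than `w`;
if it were shorter, `u` and `w` would both lie in `Lin_R(p)` (induction on `|w|`), and by
determinism the gate reached on `u` could not both continue inside `R` and leave `R` along the
rest of `w v`. So `u = w`. -/

namespace BlockAutomaton

variable {α Q : Type}

/-- The transition part of `Deterministic`. -/
def PrefixFree (A : BlockAutomaton α Q) : Prop :=
  ∀ p b₁ q₁ b₂ q₂, (p, b₁, q₁) ∈ A.trans → (p, b₂, q₂) ∈ A.trans →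
    (b₁, q₁) ≠ (b₂, q₂) → ¬ b₁ <+: b₂

def HasBlockLabels (A : BlockAutomaton α Q) : Prop :=
  ∀ t ∈ A.trans, t.2.1 ≠ ([] : List α)

variable {A B : BlockAutomaton α Q} {R : Set Q}

theorem PrefixFree.mono (h : B.trans ⊆ A.trans) (hA : A.PrefixFree) : B.PrefixFree :=
  fun p b₁ q₁ b₂ q₂ h₁ h₂ => hA p b₁ q₁ b₂ q₂ (h h₁) (h h₂)

theorem HasBlockLabels.mono (h : B.trans ⊆ A.trans) (hA : A.HasBlockLabels) :
    B.HasBlockLabels :=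
  fun t ht => hA t (h ht)

theorem internalAut_trans_subset : (A.internalAut R).trans ⊆ A.trans :=
  fun _ ht => ht.1

theorem PrefixFree.eq_of_append_eq (hA : A.PrefixFree) {p q₁ q₂ : Q} {b₁ b₂ x₁ x₂ : List α}
    (h₁ : (p, b₁, q₁) ∈ A.trans) (h₂ : (p, b₂, q₂) ∈ A.trans) (h : b₁ ++ x₁ = b₂ ++ x₂) :
    b₁ = b₂ ∧ q₁ = q₂ := by
  by_contra hne
  have hne' : (b₁, q₁) ≠ (b₂, q₂) := fun heq => hne (Prod.mk.inj heq)
  rcases List.append_eq_append_iff.mp h with ⟨c, rfl, -⟩ | ⟨c, rfl, -⟩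
  · exact hA _ _ _ _ _ h₁ h₂ hne' (List.prefix_append _ _)
  · exact hA _ _ _ _ _ h₂ h₁ (Ne.symm hne') (List.prefix_append _ _)

theorem Path.append {p r s : Q} {x y : List α} (h₁ : A.Path p x r) (h₂ : A.Path r y s) :
    A.Path p (x ++ y) s := by
  induction h₁ with
  | refl => exact h₂
  | step hb _ ih => rw [List.append_assoc]; exact Path.step hb (ih h₂)

theorem Path.mono (h : A.trans ⊆ B.trans) {p r : Q} {x : List α} (hp : A.Path p x r) :
    B.Path p x r := by
  induction hp with
  | refl p => exact Path.refl p
  | step hb _ ih => exact Path.step (h hb) ih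

theorem Path.of_append (hlab : A.HasBlockLabels) (hdet : A.PrefixFree) {p r s : Q}
    {u z : List α} (hu : A.Path p u r) (huz : A.Path p (u ++ z) s) : A.Path r z s := by
  induction hu generalizing s with
  | refl => exact huz
  | @step p m r b u hb _ ih =>
    generalize hw : b ++ u ++ z = w at huz
    cases huz with
    | refl => simp [hlab _ hb] at hw
    | @step _ m₂ _ b₂ u₂ hb₂ hpath =>
      rw [List.append_assoc] at hw
      obtain ⟨rfl, rfl⟩ := hdet.eq_of_append_eq hb hb₂ hw
      exact ih (List.append_cancel_left hw ▸ hpath)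

theorem nil_mem_Lin {g : Q} (hg : A.IsGate R g) : [] ∈ A.Lin R g :=
  ⟨g, hg, .refl g⟩

theorem append_mem_Lin {p r : Q} {b u : List α} (hb : (p, b, r) ∈ A.trans) (hp : p ∈ R)
    (hr : r ∈ R) (hu : u ∈ A.Lin R r) : b ++ u ∈ A.Lin R p := by
  obtain ⟨g, hg, hu⟩ := hu
  exact ⟨g, hg, .step ⟨hb, hp, hr⟩ hu⟩

theorem Lext_le_Lout {g : Q} (hg : A.IsGate R g) : A.Lext R g ≤ A.Lout R :=
  fun _ hw => ⟨g, hg, hw⟩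

theorem Transverse.Lext_eq (htr : A.Transverse R) {g : Q} (hg : A.IsGate R g) :
    A.Lext R g = A.Lout R := by
  refine (Lext_le_Lout hg).antisymm ?_
  rintro w ⟨g', hg', ⟨hf, rfl⟩ | ⟨b, s, hb, hs, hv⟩⟩
  · exact Or.inl ⟨(htr g' g hg' hg).1.mp hf, rfl⟩
  · exact Or.inr ⟨b, s, ((htr g' g hg' hg).2 b s hs).mp hb, hs, hv⟩

theorem rightLang_le_Lin_mul_Lout {p : Q} (hp : p ∈ R) :
    A.rightLang p ≤ A.Lin R p * A.Lout R := by
  rintro w ⟨f, hf, h⟩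
  induction h with
  | refl p =>
    have hg : A.IsGate R p := ⟨hp, Or.inl hf⟩
    exact Language.mem_mul.mpr ⟨[], nil_mem_Lin hg, [], ⟨p, hg, Or.inl ⟨hf, rfl⟩⟩, rfl⟩
  | @step p r _ b u hb h ih =>
    by_cases hr : r ∈ R
    · obtain ⟨u', hu', v, hv, rfl⟩ := Language.mem_mul.mp (ih hr hf)
      rw [← List.append_assoc]
      exact Language.mem_mul.mpr ⟨b ++ u', append_mem_Lin hb hp hr hu', v, hv, rfl⟩
    · have hg : A.IsGate R p := ⟨hp, Or.inr ⟨b, r, hb, hr⟩⟩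
      exact Language.mem_mul.mpr ⟨[], nil_mem_Lin hg, b ++ u,
        Lext_le_Lout hg (Or.inr ⟨b, r, hb, hr, u, ⟨_, hf, h⟩, rfl⟩), rfl⟩

theorem Transverse.rightLang_eq (htr : A.Transverse R) {p : Q} (hp : p ∈ R) :
    A.rightLang p = A.Lin R p * A.Lout R := by
  refine (rightLang_le_Lin_mul_Lout hp).antisymm fun w hw => ?_
  obtain ⟨u, ⟨g, hg, hu⟩, v, hv, rfl⟩ := Language.mem_mul.mp hw
  replace hu := hu.mono internalAut_trans_subset
  rw [← htr.Lext_eq hg] at hv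
  rcases hv with ⟨hf, rfl⟩ | ⟨b, s, hb, -, v, ⟨f, hf, hv⟩, rfl⟩
  · exact ⟨g, hf, by simpa using hu⟩
  · exact ⟨f, hf, hu.append (.step hb hv)⟩

theorem append_notMem_Lout (hlab : A.HasBlockLabels) (hdet : A.PrefixFree)
    (htr : A.Transverse R) {p : Q} {u z : List α} (hz : z ≠ []) (hu : u ∈ A.Lin R p)
    (huz : u ++ z ∈ A.Lin R p) (v : List α) : z ++ v ∉ A.Lout R := by
  obtain ⟨g, hg, hu⟩ := hu
  obtain ⟨g', -, huz⟩ := huz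
  have hgz : (A.internalAut R).Path g z g' :=
    hu.of_append (hlab.mono internalAut_trans_subset) (hdet.mono internalAut_trans_subset) huz
  rw [← htr.Lext_eq hg]
  rintro (⟨-, hnil⟩ | ⟨b, s, hb, hs, v', -, hbv⟩)
  · exact hz (List.append_eq_nil_iff.mp hnil).1
  · cases hgz with
    | refl => exact hz rfl
    | step hℓ _ =>
      rw [List.append_assoc] at hbv
      obtain ⟨-, rfl⟩ := hdet.eq_of_append_eq hℓ.1 hb hbv
      exact hs hℓ.2.2

theorem Lin_le_of_rightLang_eq (hlab : A.HasBlockLabels) (hdet : A.PrefixFree)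
    (htr : A.Transverse R) {v : List α} (hv : v ∈ A.Lout R)
    (hmin : ∀ v' ∈ A.Lout R, v.length ≤ v'.length) {p q : Q} (hp : p ∈ R) (hq : q ∈ R)
    (hpq : A.rightLang p = A.rightLang q) : A.Lin R p ≤ A.Lin R q := by
  intro w (hw : w ∈ A.Lin R p)
  show w ∈ A.Lin R q
  induction hn : w.length using Nat.strong_induction_on generalizing w p q with
  | _ n ih =>
  have hwv : w ++ v ∈ A.Lin R q * A.Lout R := by
    rw [← htr.rightLang_eq hq, ← hpq, htr.rightLang_eq hp]
    exact Language.mem_mul.mpr ⟨w, hw, v, hv, rfl⟩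
  obtain ⟨u, hu, v', hv', huv⟩ := Language.mem_mul.mp hwv
  rcases List.append_eq_append_iff.mp huv with ⟨z, rfl, rfl⟩ | ⟨z, rfl, rfl⟩
  · by_cases hz : z = []
    · simpa [hz] using hu
    have hup : u ∈ A.Lin R p := ih u.length (by simp [← hn, List.length_pos_iff.mpr hz])
      hq hp hpq.symm hu rfl
    exact absurd hv' (append_notMem_Lout hlab hdet htr hz hup hw v)
  · by_cases hz : z = []
    · simpa [hz] using hu
    have := hmin v' hv'
    simp [List.length_append, List.length_eq_zero_iff, hz] at this

theorem Lin_eq_of_rightLang_eq (htrim : A.Trim) (hlab : A.HasBlockLabels)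
    (hdet : A.PrefixFree) (htr : A.Transverse R) {p q : Q} (hp : p ∈ R) (hq : q ∈ R)
    (hpq : A.rightLang p = A.rightLang q) : A.Lin R p = A.Lin R q := by
  have hK : (A.Lout R).Nonempty := by
    obtain ⟨-, f, hf, w, hw⟩ := htrim p
    obtain ⟨-, -, v, hv, -⟩ := Language.mem_mul.mp (rightLang_le_Lin_mul_Lout hp ⟨f, hf, hw⟩)
    exact ⟨v, hv⟩
  obtain ⟨v, hv, hmin⟩ := (measure List.length).wf.has_min _ hK
  have hmin' : ∀ v' ∈ A.Lout R, v.length ≤ v'.length := fun v' hv' => not_lt.mp (hmin v' hv')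
  exact (Lin_le_of_rightLang_eq hlab hdet htr hv hmin' hp hq hpq).antisymm
    (Lin_le_of_rightLang_eq hlab hdet htr hv hmin' hq hp hpq.symm)

end BlockAutomaton

theorem stmt7_general {α Q : Type}
    (A : BlockAutomaton α Q) (hwf : A.IsWF) (htrim : A.Trim) (hdet : A.Deterministic)
    (R : Set Q) (htr : A.Transverse R) :
    ∀ p ∈ R, ∀ q ∈ R, (A.rightLang p = A.rightLang q ↔ A.Lin R p = A.Lin R q) := by
  intro p hp q hq
  refine ⟨BlockAutomaton.Lin_eq_of_rightLang_eq htrim hwf.2 hdet.2 htr hp hq, fun h => ?_⟩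
  rw [htr.rightLang_eq hp, htr.rightLang_eq hq, h]

/-- In a trim deterministic block automaton, for a transverse non
re-entering component R and states p, q ∈ R: L(p) = L(q) iff Lin_R(p) = Lin_R(q). -/
theorem stmt7 {α Q : Type} [Fintype α] [Fintype Q]
    (A : BlockAutomaton α Q) (hwf : A.IsWF) (htrim : A.Trim) (hdet : A.Deterministic)
    (R : Set Q) (hR : A.NonReentering R) (htr : A.Transverse R) :
    ∀ p ∈ R, ∀ q ∈ R, (A.rightLang p = A.rightLang q ↔ A.Lin R p = A.Lin R q) :=
  stmt7_general A hwf htrim hdet R htr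
end
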